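/- For every λ ∈ ℚ with λ ≠ 0, the subspace T_- is a two-sided ideal of (ℚ⟨L⟩, ⧢_λ): for all a ∈ T_- and b ∈ ℚ⟨L⟩, both a ⧢_λ b and b ⧢_λ a lie in T_-. -/

import Mathlib

open scoped TensorProduct

/-- The two-letter alphabet `L = {d, y}`. -/
inductive Letter : Type
  | d : Letter
  | y : Letter
deriving DecidableEq

/-- `ℚ⟨L⟩`, the ℚ-vector space with basis the words on `L` (with the concatenation
product, it is the free noncommutative ℚ-algebra on `L`). -/
abbrev V : Type := MonoidAlgebra ℚ (FreeMonoid Letter)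

/-- The basis vector corresponding to a word. -/
noncomputable def wrd (w : List Letter) : V :=
  MonoidAlgebra.single (FreeMonoid.ofList w) (1 : ℚ)

/-- The shuffle-type product `⧢_λ` on basis words, defined recursively by
(P1) `e ⧢ w = w ⧢ e = w`; (P2) `(yu) ⧢ v = u ⧢ (yv) = y(u ⧢ v)`;
(P3) `(du) ⧢ (dv) = (1/λ)(d(u ⧢ v) − (du) ⧢ v − u ⧢ (dv))`. -/
noncomputable def shW (lam : ℚ) : List Letter → List Letter → V
  | [], v => wrd v
  | u@(_ :: _), [] => wrd u
  | (Letter.y :: u), v => wrd [Letter.y] * shW lam u v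
  | (Letter.d :: u), (Letter.y :: v) => wrd [Letter.y] * shW lam (Letter.d :: u) v
  | (Letter.d :: u), (Letter.d :: v) =>
      lam⁻¹ • (wrd [Letter.d] * shW lam u v
        - shW lam (Letter.d :: u) v - shW lam u (Letter.d :: v))
termination_by u v => u.length + v.length

/-- The ℚ-bilinear extension of `⧢_λ` to `ℚ⟨L⟩`. -/
noncomputable def shL (lam : ℚ) : V →ₗ[ℚ] V →ₗ[ℚ] V :=
  (Finsupp.lsum ℚ fun u => LinearMap.toSpanSingleton ℚ (V →ₗ[ℚ] V)
    ((Finsupp.lsum ℚ fun v =>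
      LinearMap.toSpanSingleton ℚ V (shW lam (FreeMonoid.toList u) (FreeMonoid.toList v)))
      ∘ₗ (MonoidAlgebra.coeffLinearEquiv ℚ).toLinearMap))
    ∘ₗ (MonoidAlgebra.coeffLinearEquiv ℚ).toLinearMap

/-- `T₋ ⊆ ℚ⟨L⟩`: the span of the words ending in the letter `d`. -/
noncomputable def Tneg : Submodule ℚ V :=
  Submodule.span ℚ {x : V | ∃ w : List Letter, x = wrd (w ++ [Letter.d])}

/-! Left concatenation by a letter preserves `T₋`, and each defining relation of `⧢_λ` writes
`u ⧢ v` through shorter products, some prefixed by a letter. Hence, by induction along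
that recursion, `u ⧢ v ∈ T₋` as soon as `u` or `v` ends in `d`, and bilinearity extends this from
words to `T₋ × ℚ⟨L⟩` and `ℚ⟨L⟩ × T₋`. The only subtle case is (P3) with `u` or `v` empty, where the
term `d(u ⧢ v)` cancels a boundary term instead of lying in `T₋` by induction. -/

lemma wrd_mul (u v : List Letter) : wrd u * wrd v = wrd (u ++ v) := by
  simp [wrd, MonoidAlgebra.single_mul_single]

lemma wrd_mem_Tneg {w : List Letter} (h : [Letter.d] <:+ w) : wrd w ∈ Tneg := by
  obtain ⟨t, rfl⟩ := h
  exact Submodule.subset_span ⟨t, rfl⟩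

lemma wrd_mul_mem_Tneg (w : List Letter) {t : V} (ht : t ∈ Tneg) : wrd w * t ∈ Tneg := by
  induction ht using Submodule.span_induction with
  | mem x hx =>
    obtain ⟨u, rfl⟩ := hx
    rw [wrd_mul, ← List.append_assoc]
    exact wrd_mem_Tneg (List.suffix_append _ _)
  | zero => simp
  | add x y _ _ hx hy => simpa only [mul_add] using add_mem hx hy
  | smul r x _ hx => simpa only [mul_smul_comm] using Submodule.smul_mem _ r hx

lemma suffix_of_singleton_suffix_cons {a c : Letter} {u : List Letter} (h : [a] <:+ c :: u)
    (hu : u ≠ [] ∨ c ≠ a) : [a] <:+ u := by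
  rcases List.suffix_cons_iff.mp h with h | h
  · simp only [List.cons.injEq] at h
    exact absurd h.2.symm (by tauto)
  · exact h

lemma shW_nil_right (lam : ℚ) (u : List Letter) : shW lam u [] = wrd u := by
  cases u <;> rw [shW]

theorem shW_mem_Tneg (lam : ℚ) {u v : List Letter}
    (h : [Letter.d] <:+ u ∨ [Letter.d] <:+ v) : shW lam u v ∈ Tneg := by
  fun_induction shW lam u v with
  | case1 v =>
    exact wrd_mem_Tneg (h.resolve_left (by simp))
  | case2 c u =>
    exact wrd_mem_Tneg (h.resolve_right (by simp))
  | case3 u v hv ih =>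
    exact wrd_mul_mem_Tneg _ (ih (h.imp_left (suffix_of_singleton_suffix_cons · (.inr (by simp)))))
  | case4 u v ih =>
    exact wrd_mul_mem_Tneg _ (ih (h.imp_right (suffix_of_singleton_suffix_cons · (.inr (by simp)))))
  | case5 u v ih ihu ihv =>
    refine Submodule.smul_mem _ _ ?_
    -- for `u = []`, `d(e ⧢ v) = dv = e ⧢ dv`, leaving `-(d ⧢ v)`; symmetrically for `v = []`
    rcases eq_or_ne u [] with rfl | hu
    · rw [shW, shW, wrd_mul, List.singleton_append, sub_sub_cancel_left]
      exact neg_mem (ihu (.inl (List.suffix_refl _)))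
    rcases eq_or_ne v [] with rfl | hv
    · rw [shW_nil_right, shW_nil_right, wrd_mul, List.singleton_append, sub_self, zero_sub]
      exact neg_mem (ihv (.inr (List.suffix_refl _)))
    have h' := h.imp (suffix_of_singleton_suffix_cons · (.inl hu))
      (suffix_of_singleton_suffix_cons · (.inl hv))
    have hd_u := h'.imp_left (·.trans (List.suffix_cons Letter.d u))
    have hd_v := h'.imp_right (·.trans (List.suffix_cons Letter.d v))
    exact sub_mem (sub_mem (wrd_mul_mem_Tneg _ (ih h')) (ihu hd_u)) (ihv hd_v)

lemma LinearMap.apply_apply_mem_of_mem_span {R M N P : Type*} [CommSemiring R]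
    [AddCommMonoid M] [AddCommMonoid N] [AddCommMonoid P] [Module R M] [Module R N] [Module R P]
    (f : M →ₗ[R] N →ₗ[R] P) {s : Set M} {t : Set N} {p : Submodule R P}
    (h : ∀ m ∈ s, ∀ n ∈ t, f m n ∈ p) {m : M} {n : N}
    (hm : m ∈ Submodule.span R s) (hn : n ∈ Submodule.span R t) : f m n ∈ p := by
  have hmn := Submodule.apply_mem_map₂ f hm hn
  rw [Submodule.map₂_span_span] at hmn
  exact Submodule.span_le.mpr (Set.image2_subset_iff.mpr h) hmn

lemma mem_span_range_wrd (x : V) : x ∈ Submodule.span ℚ (Set.range wrd) := by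
  refine Submodule.span_mono ?_ (MonoidAlgebra.mem_span_support_coeff x)
  rintro _ ⟨m, -, rfl⟩
  exact ⟨m.toList, by simp [wrd, MonoidAlgebra.of_apply]⟩

lemma shL_wrd (lam : ℚ) (u v : List Letter) : shL lam (wrd u) (wrd v) = shW lam u v := by
  simp [shL, wrd]

theorem stmt_9_general (lam : ℚ) (a : V) (ha : a ∈ Tneg) (b : V) :
    shL lam a b ∈ Tneg ∧ shL lam b a ∈ Tneg := by
  have hb := mem_span_range_wrd b
  constructor
  · refine (shL lam).apply_apply_mem_of_mem_span ?_ ha hb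
    rintro _ ⟨u, rfl⟩ _ ⟨v, rfl⟩
    rw [shL_wrd]
    exact shW_mem_Tneg lam (.inl (List.suffix_append _ _))
  · refine (shL lam).apply_apply_mem_of_mem_span ?_ hb ha
    rintro _ ⟨u, rfl⟩ _ ⟨v, rfl⟩
    rw [shL_wrd]
    exact shW_mem_Tneg lam (.inr (List.suffix_append _ _))

/-- For `λ ≠ 0`, the subspace `T₋` is a two-sided ideal of `(ℚ⟨L⟩, ⧢_λ)`. -/
theorem stmt_9 (lam : ℚ) (hlam : lam ≠ 0) (a : V) (ha : a ∈ Tneg) (b : V) :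
    shL lam a b ∈ Tneg ∧ shL lam b a ∈ Tneg :=
  stmt_9_general lam a ha b
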